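/- (Lipschitz continuity of the continuation value.) Fix a horizon H ≥ 2, a damage rate κ > 0, a reward exponent β ∈ (0,1], and effort levels 0 < e_L < e_H ≤ 1. Let V(d) = 2^{−(H−1)} ∑_{e ∈ {e_L,e_H}^{H−1}} G_e(d) be the uniform-policy continuation value and ē_β = (e_L^β + e_H^β)/2. Then for all d₁, d₂ ≥ 0 with dᵢ + κ(H−1)e_H ≤ 1 for i = 1, 2, we have |V(d₁) − V(d₂)| ≤ 2(H−1)·ē_β·|d₁ − d₂|. -/

import Mathlib

/-- Continuation return along effort sequence `e` from initial damage `d`. -/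
noncomputable def contReturn (H : ℕ) (κ β : ℝ) (e : ℕ → ℝ) (d : ℝ) : ℝ :=
  ∑ t ∈ Finset.range (H - 1),
    (e t) ^ β * (1 - (d + κ * ∑ s ∈ Finset.range t, e s)) ^ 2

/-- Uniform-policy continuation value: the average of `contReturn` over all
`2^(H-1)` effort sequences with values in `{eL, eH}`, encoded by
`c : Fin (H-1) → Bool` (`true ↦ eH`, `false ↦ eL`). -/
noncomputable def contValue (H : ℕ) (κ β eL eH : ℝ) (d : ℝ) : ℝ :=
  (2 : ℝ) ^ (-((H : ℤ) - 1)) *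
    ∑ c : Fin (H - 1) → Bool,
      contReturn H κ β
        (fun t => if ht : t < H - 1 then (if c ⟨t, ht⟩ then eH else eL) else 0) d

/-!
Each summand `e_t^β (1 - D_t)²` of a return is Lipschitz in the initial damage with constant
`2 e_t^β`, because `D_t` shifts rigidly with `d` and `x ↦ x²` is `2`-Lipschitz on `[-1, 1]`.
Averaging over the uniform policy, each coordinate of a uniformly random effort sequence
contributes `ē_β`, and there are `H - 1` of them.
-/

open Finset

lemma Fintype.sum_pi_comp_apply {ι β M : Type*} [Fintype ι] [DecidableEq ι] [Fintype β]
    [AddCommMonoid M] (i : ι) (g : β → M) :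
    ∑ c : ι → β, g (c i) = (Fintype.card β ^ (Fintype.card ι - 1)) • ∑ b, g b := by
  rw [← (Equiv.funSplitAt i β).symm.sum_comp, Fintype.sum_prod_type_right]
  simp [Equiv.funSplitAt, Equiv.piSplitAt, Finset.smul_sum]

lemma abs_sq_sub_sq_le_two_mul_abs_sub {x y : ℝ} (hx : |x| ≤ 1) (hy : |y| ≤ 1) :
    |x ^ 2 - y ^ 2| ≤ 2 * |x - y| := by
  rw [sq_sub_sq, abs_mul]
  have hxy : |x + y| ≤ 2 := (abs_add_le x y).trans (by linarith)
  exact mul_le_mul_of_nonneg_right hxy (abs_nonneg _)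

section Damage

variable {H : ℕ} {κ eH : ℝ} {e : ℕ → ℝ}

lemma damage_mem_Icc (hκ : 0 ≤ κ) (he0 : ∀ s < H - 1, 0 ≤ e s) (heH : ∀ s < H - 1, e s ≤ eH)
    {d : ℝ} (hd : 0 ≤ d) (hb : d + κ * ((H : ℝ) - 1) * eH ≤ 1) {t : ℕ} (ht : t < H - 1) :
    d + κ * ∑ s ∈ range t, e s ∈ Set.Icc 0 1 := by
  have heH0 : 0 ≤ eH := (he0 0 (by omega)).trans (heH 0 (by omega))
  have htH : (t : ℝ) ≤ (H : ℝ) - 1 := by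
    have : (t : ℝ) + 1 ≤ H := by exact_mod_cast (show t + 1 ≤ H by omega)
    linarith
  have hsum : ∑ s ∈ range t, e s ≤ (H - 1) * eH :=
    calc ∑ s ∈ range t, e s ≤ ∑ _s ∈ range t, eH :=
          sum_le_sum fun s hs => heH s ((mem_range.1 hs).trans ht)
      _ = t * eH := by rw [sum_const, card_range, nsmul_eq_mul]
      _ ≤ (H - 1) * eH := mul_le_mul_of_nonneg_right htH heH0
  have hsum0 : 0 ≤ ∑ s ∈ range t, e s :=
    sum_nonneg fun s hs => he0 s ((mem_range.1 hs).trans ht)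
  constructor
  · positivity
  · linarith [mul_le_mul_of_nonneg_left hsum hκ]

lemma abs_contReturn_sub_le (β : ℝ) (hκ : 0 ≤ κ) (he0 : ∀ s < H - 1, 0 ≤ e s)
    (heH : ∀ s < H - 1, e s ≤ eH) {d₁ d₂ : ℝ} (hd₁ : 0 ≤ d₁) (hd₂ : 0 ≤ d₂)
    (hb₁ : d₁ + κ * ((H : ℝ) - 1) * eH ≤ 1) (hb₂ : d₂ + κ * ((H : ℝ) - 1) * eH ≤ 1) :
    |contReturn H κ β e d₁ - contReturn H κ β e d₂| ≤
      2 * |d₁ - d₂| * ∑ t ∈ range (H - 1), e t ^ β := by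
  rw [contReturn, contReturn, ← sum_sub_distrib, mul_sum]
  refine (abs_sum_le_sum_abs _ _).trans (sum_le_sum fun t ht => ?_)
  rw [mem_range] at ht
  have hpow : 0 ≤ e t ^ β := Real.rpow_nonneg (he0 t ht) β
  have hx := damage_mem_Icc hκ he0 heH hd₁ hb₁ ht
  have hy := damage_mem_Icc hκ he0 heH hd₂ hb₂ ht
  set S := κ * ∑ s ∈ range t, e s
  have hstep : |(1 - (d₁ + S)) ^ 2 - (1 - (d₂ + S)) ^ 2| ≤ 2 * |d₁ - d₂| := by
    have h := abs_sq_sub_sq_le_two_mul_abs_sub (x := 1 - (d₁ + S)) (y := 1 - (d₂ + S))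
      (abs_le.2 ⟨by linarith [hx.2], by linarith [hx.1]⟩)
      (abs_le.2 ⟨by linarith [hy.2], by linarith [hy.1]⟩)
    rwa [show 1 - (d₁ + S) - (1 - (d₂ + S)) = d₂ - d₁ by ring, abs_sub_comm d₂ d₁] at h
  rw [← mul_sub, abs_mul, abs_of_nonneg hpow, mul_comm (2 * |d₁ - d₂|)]
  exact mul_le_mul_of_nonneg_left hstep hpow

end Damage

/-- The effort sequence encoded by `c`, verbatim as in `contValue`. -/
noncomputable def effortSeq (n : ℕ) (eL eH : ℝ) (c : Fin n → Bool) (t : ℕ) : ℝ :=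
  if ht : t < n then (if c ⟨t, ht⟩ then eH else eL) else 0

lemma sum_sum_effortSeq_rpow (n : ℕ) (eL eH β : ℝ) :
    ∑ c : Fin n → Bool, ∑ t ∈ range n, effortSeq n eL eH c t ^ β =
      n * (2 ^ n * ((eL ^ β + eH ^ β) / 2)) := by
  rw [sum_comm, ← card_range n, ← nsmul_eq_mul, ← sum_const, card_range]
  refine sum_congr rfl fun t ht => ?_
  have ht : t < n := mem_range.1 ht
  obtain ⟨m, rfl⟩ : ∃ m, n = m + 1 := ⟨n - 1, by omega⟩
  simp only [effortSeq, dif_pos ht]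
  refine (Fintype.sum_pi_comp_apply (⟨t, ht⟩ : Fin (m + 1))
    (fun b : Bool => (if b then eH else eL) ^ β)).trans ?_
  simp only [Fintype.card_bool, Fintype.card_fin, Fintype.sum_bool, nsmul_eq_mul]
  push_cast
  ring

theorem stmt_10_general (H : ℕ) (hH : 2 ≤ H) (κ β eL eH : ℝ)
    (hκ : 0 < κ)
    (heL : 0 < eL) (hLH : eL < eH)
    (d₁ d₂ : ℝ) (hd₁ : 0 ≤ d₁) (hd₂ : 0 ≤ d₂)
    (hb₁ : d₁ + κ * ((H : ℝ) - 1) * eH ≤ 1)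
    (hb₂ : d₂ + κ * ((H : ℝ) - 1) * eH ≤ 1) :
    |contValue H κ β eL eH d₁ - contValue H κ β eL eH d₂| ≤
      2 * ((H : ℝ) - 1) * ((eL ^ β + eH ^ β) / 2) * |d₁ - d₂| := by
  set n := H - 1 with hn
  have hHn : (H : ℝ) - 1 = n := by rw [hn, Nat.cast_sub (by omega), Nat.cast_one]
  have hscale : (2 : ℝ) ^ (-((H : ℤ) - 1)) = ((2 : ℝ) ^ n)⁻¹ := by
    rw [show (H : ℤ) - 1 = n by omega, zpow_neg, zpow_natCast]
  have hreturn (c : Fin n → Bool) :=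
    abs_contReturn_sub_le β hκ.le (e := effortSeq n eL eH c) (eH := eH)
      (fun s hs => by unfold effortSeq; split_ifs <;> linarith)
      (fun s hs => by unfold effortSeq; split_ifs <;> linarith) hd₁ hd₂ hb₁ hb₂
  calc |contValue H κ β eL eH d₁ - contValue H κ β eL eH d₂|
      = ((2 : ℝ) ^ n)⁻¹ * |∑ c : Fin n → Bool, (contReturn H κ β (effortSeq n eL eH c) d₁ -
          contReturn H κ β (effortSeq n eL eH c) d₂)| := by
        rw [contValue, contValue, ← mul_sub, ← sum_sub_distrib, abs_mul, hscale,
          abs_of_pos (by positivity)]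
        rfl
    _ ≤ ((2 : ℝ) ^ n)⁻¹ * ∑ c : Fin n → Bool,
          2 * |d₁ - d₂| * ∑ t ∈ range n, effortSeq n eL eH c t ^ β := by
        gcongr
        exact (abs_sum_le_sum_abs _ _).trans (sum_le_sum fun c _ => hreturn c)
    _ = 2 * ((H : ℝ) - 1) * ((eL ^ β + eH ^ β) / 2) * |d₁ - d₂| := by
        rw [← mul_sum, sum_sum_effortSeq_rpow, hHn]
        field_simp

theorem stmt_10 (H : ℕ) (hH : 2 ≤ H) (κ β eL eH : ℝ)
    (hκ : 0 < κ) (hβ0 : 0 < β) (hβ1 : β ≤ 1)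
    (heL : 0 < eL) (hLH : eL < eH) (heH : eH ≤ 1)
    (d₁ d₂ : ℝ) (hd₁ : 0 ≤ d₁) (hd₂ : 0 ≤ d₂)
    (hb₁ : d₁ + κ * ((H : ℝ) - 1) * eH ≤ 1)
    (hb₂ : d₂ + κ * ((H : ℝ) - 1) * eH ≤ 1) :
    |contValue H κ β eL eH d₁ - contValue H κ β eL eH d₂| ≤
      2 * ((H : ℝ) - 1) * ((eL ^ β + eH ^ β) / 2) * |d₁ - d₂| :=
  stmt_10_general H hH κ β eL eH hκ heL hLH d₁ d₂ hd₁ hd₂ hb₁ hb₂
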